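/- arXiv:1708.09790 — 5 statements merged into one kernel-verified Lean document; each statement's English description precedes it below -/
import Mathlib

section
/- For all 0 ≤ τ < 1 and 0 ≤ c ≤ 1, the target pool's reward R_p = β/(1-τα) + cτα(1-α-β)/(1-τα) is strictly less than β + τα, the pool's reward in the absence of an FAW attack. -/
/-! Clearing the positive denominator `1 - τα`, the numerator only grows when `c` is raised to `1`,
and at `c = 1` the attack-free reward `(β + τα)(1 - τα)` still exceeds it by `τα (α - τα) > 0`:
the infiltrating power `τα` is strictly smaller than the attacker's total power `α`. -/

theorem add_mul_one_sub_sub_lt_add_mul_one_sub {x α : ℝ} (β : ℝ) (hx0 : 0 < x) (hxα : x < α) :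
    β + x * (1 - α - β) < (β + x) * (1 - x) := by
  have hgap : (β + x) * (1 - x) - (β + x * (1 - α - β)) = x * (α - x) := by ring
  have : 0 < x * (α - x) := mul_pos hx0 (sub_pos.2 hxα)
  linarith

theorem faw_pool_reward_lt_no_attack_general (α β τ c : ℝ)
    (hα0 : 0 < α) (hα1 : α < 1 / 2) (hαβ : α + β < 1)
    (hτ0 : 0 < τ) (hτ1 : τ < 1) (hc1 : c ≤ 1) :
    β / (1 - τ * α) + c * (τ * α) * (1 - α - β) / (1 - τ * α) < β + τ * α := by
  have hτα : 0 < τ * α := mul_pos hτ0 hα0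
  have hden : 0 < 1 - τ * α :=
    sub_pos.2 (mul_lt_one_of_nonneg_of_lt_one_left hτ0.le hτ1 (by linarith))
  rw [← add_div, div_lt_iff₀ hden]
  calc β + c * (τ * α) * (1 - α - β)
      ≤ β + τ * α * (1 - α - β) := by
        have hrest : 0 ≤ 1 - α - β := by linarith
        gcongr β + ?_ * _
        exact mul_le_of_le_one_left hτα.le hc1
    _ < (β + τ * α) * (1 - τ * α) :=
        add_mul_one_sub_sub_lt_add_mul_one_sub β hτα (mul_lt_of_lt_one_left hα0 hτ1)

theorem faw_pool_reward_lt_no_attack (α β τ c : ℝ)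
    (hα0 : 0 < α) (hα1 : α < 1 / 2) (hβ : 0 < β) (hαβ : α + β < 1)
    (hτ0 : 0 < τ) (hτ1 : τ < 1) (hc0 : 0 ≤ c) (hc1 : c ≤ 1) :
    β / (1 - τ * α) + c * (τ * α) * (1 - α - β) / (1 - τ * α) < β + τ * α :=
  faw_pool_reward_lt_no_attack_general α β τ c hα0 hα1 hαβ hτ0 hτ1 hc1
end

section
/- For every α, β with 0 < α, 0 < β, α + β < 1, there exists τ ∈ (0,1) such that the FAW attacker's reward at c = 0, R_a(τ, 0) = (1-τ)α/(1-τα) + (β/(1-τα))·(τα/(β+τα)), strictly exceeds α (the honest mining reward). -/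
theorem bwh_attack_profitable (α β : ℝ)
    (hα : 0 < α) (hβ : 0 < β) (hαβ : α + β < 1) :
    ∃ τ ∈ Set.Ioo (0 : ℝ) 1,
      α < (1 - τ) * α / (1 - τ * α) + (β / (1 - τ * α)) * (τ * α / (β + τ * α)) := by
  have h1α : 0 < 1 - α := by linarith
  set τ : ℝ := β / (2 * (1 - α)) with hτ
  have hτ0 : 0 < τ := by positivity
  have hτ1 : τ < 1 := by
    rw [hτ, div_lt_one (by linarith)]
    linarith
  have hden1 : 0 < 1 - τ * α := by nlinarith
  have hden2 : 0 < β + τ * α := by positivity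
  refine ⟨τ, ⟨hτ0, hτ1⟩, ?_⟩
  rw [div_mul_div_comm, div_add_div _ _ (ne_of_gt hden1) (ne_of_gt (mul_pos hden1 hden2)), lt_div_iff₀ (by positivity)]
  have key : τ * (1 - α) < β := by
    rw [hτ]; rw [div_mul_eq_mul_div, div_lt_iff₀ (by linarith)]
    nlinarith
  nlinarith [mul_pos hτ0 hα, mul_pos hden1 (mul_pos (mul_pos hτ0 hα) (sub_pos.mpr key))]
end

section
/- For every α, β with 0 < α, 0 < β, α + β < 1 and every c ∈ [0,1], there exists τ ∈ (0,1) such that R_a(τ, c) = (1-τ)α/(1-τα) + (β/(1-τα) + cτα(1-α-β)/(1-τα))·(τα/(β+τα)) > α. In other words, the FAW attack is always more profitable than honest mining. -/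
/-- The FAW attacker's expected per-round reward `R_a(τ, c)`. -/
noncomputable def fawReward (α β c τ : ℝ) : ℝ :=
  (1 - τ) * α / (1 - τ * α)
    + (β / (1 - τ * α) + c * (τ * α) * (1 - α - β) / (1 - τ * α)) * (τ * α / (β + τ * α))

section

variable {α β c τ : ℝ}

theorem fawReward_sub_self (hD : 1 - τ * α ≠ 0) (hE : β + τ * α ≠ 0) :
    fawReward α β c τ - α
      = τ * α ^ 2 * (β - τ * (1 - α - c * (1 - α - β))) / ((1 - τ * α) * (β + τ * α)) := by
  unfold fawReward
  field_simp
  ring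

theorem lt_fawReward_iff (hα : 0 < α) (hτ : 0 < τ) (hD : 0 < 1 - τ * α) (hE : 0 < β + τ * α) :
    α < fawReward α β c τ ↔ τ * (1 - α - c * (1 - α - β)) < β := by
  have hcoef : 0 < τ * α ^ 2 := by positivity
  rw [← sub_pos, fawReward_sub_self hD.ne' hE.ne', div_pos_iff_of_pos_right (by positivity),
    mul_pos_iff_of_pos_left hcoef, sub_pos]

end

theorem faw_attack_profitable_general (α β c : ℝ)
    (hα : 0 < α) (hβ : 0 < β) (hαβ : α + β < 1) (hc0 : 0 ≤ c) :
    ∃ τ ∈ Set.Ioo (0 : ℝ) 1,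
      α < (1 - τ) * α / (1 - τ * α)
        + (β / (1 - τ * α) + c * (τ * α) * (1 - α - β) / (1 - τ * α)) * (τ * α / (β + τ * α)) := by
  have hβ1 : β < 1 := by linarith
  have hD : 0 < 1 - β * α := by nlinarith
  have hwithheld : 0 ≤ c * (1 - α - β) := mul_nonneg hc0 (by linarith)
  -- Infiltrating with `τ = β` already suffices: then `τ (1 - α) = β (1 - α) < β`.
  refine ⟨β, ⟨hβ, hβ1⟩, (lt_fawReward_iff hα hβ hD (by positivity)).2 ?_⟩
  nlinarith

theorem faw_attack_profitable (α β c : ℝ)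
    (hα : 0 < α) (hβ : 0 < β) (hαβ : α + β < 1) (hc0 : 0 ≤ c) (hc1 : c ≤ 1) :
    ∃ τ ∈ Set.Ioo (0 : ℝ) 1,
      α < (1 - τ) * α / (1 - τ * α)
        + (β / (1 - τ * α) + c * (τ * α) * (1 - α - β) / (1 - τ * α)) * (τ * α / (β + τ * α)) :=
  faw_attack_profitable_general α β c hα hβ hαβ hc0
end

section
/- For all τ ∈ [0,1) and c ∈ [0,1], the FAW attacker's reward satisfies R_a(τ, c) ≥ R_a(τ, 0), i.e., the BWH attacker's reward with the same infiltration fraction is a lower bound for the FAW attacker's reward; hence sup over τ of R_a(τ,c) is at least sup over τ of R_a(τ,0). -/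
theorem faw_reward_lower_bounded_by_bwh (α β : ℝ)
    (hα : 0 < α) (hβ : 0 < β) (hαβ : α + β < 1) :
    (∀ τ ∈ Set.Ico (0 : ℝ) 1, ∀ c ∈ Set.Icc (0 : ℝ) 1,
      (1 - τ) * α / (1 - τ * α)
        + (β / (1 - τ * α) + 0 * (τ * α) * (1 - α - β) / (1 - τ * α)) * (τ * α / (β + τ * α))
      ≤ (1 - τ) * α / (1 - τ * α)
        + (β / (1 - τ * α) + c * (τ * α) * (1 - α - β) / (1 - τ * α)) * (τ * α / (β + τ * α)))
    ∧ (∀ c ∈ Set.Icc (0 : ℝ) 1,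
      (⨆ τ : Set.Ico (0 : ℝ) 1,
        (1 - τ.1) * α / (1 - τ.1 * α)
          + (β / (1 - τ.1 * α) + 0 * (τ.1 * α) * (1 - α - β) / (1 - τ.1 * α))
            * (τ.1 * α / (β + τ.1 * α)))
      ≤ ⨆ τ : Set.Ico (0 : ℝ) 1,
        (1 - τ.1) * α / (1 - τ.1 * α)
          + (β / (1 - τ.1 * α) + c * (τ.1 * α) * (1 - α - β) / (1 - τ.1 * α))
            * (τ.1 * α / (β + τ.1 * α))) := by
  have hα1 : α < 1 := by linarith
  have h1a : (0:ℝ) < 1 - α := by linarith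
  have key : ∀ τ ∈ Set.Ico (0 : ℝ) 1, ∀ c ∈ Set.Icc (0 : ℝ) 1,
      (1 - τ) * α / (1 - τ * α)
        + (β / (1 - τ * α) + 0 * (τ * α) * (1 - α - β) / (1 - τ * α)) * (τ * α / (β + τ * α))
      ≤ (1 - τ) * α / (1 - τ * α)
        + (β / (1 - τ * α) + c * (τ * α) * (1 - α - β) / (1 - τ * α)) * (τ * α / (β + τ * α)) := by
    intro τ hτ c hc
    obtain ⟨hτ0, hτ1⟩ := hτ
    obtain ⟨hc0, hc1⟩ := hc
    have h1 : 0 < 1 - τ * α := by nlinarith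
    have h2 : 0 < β + τ * α := by positivity
    have hE : 0 ≤ c * (τ * α) * (1 - α - β) / (1 - τ * α) := by
      apply div_nonneg _ h1.le
      apply mul_nonneg (by positivity) (by linarith)
    have ht : 0 ≤ τ * α / (β + τ * α) := by positivity
    have h0 : (0:ℝ) * (τ * α) * (1 - α - β) / (1 - τ * α) = 0 := by ring
    rw [h0]
    gcongr
  refine ⟨key, fun c hc => ?_⟩
  haveI : Nonempty (Set.Ico (0:ℝ) 1) := ⟨⟨0, by norm_num⟩⟩
  apply ciSup_mono
  · refine ⟨(α + β + 1) / (1 - α), ?_⟩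
    rintro x ⟨⟨τ, hτ0, hτ1⟩, rfl⟩
    obtain ⟨hc0, hc1⟩ := hc
    have h1 : 0 < 1 - τ * α := by nlinarith
    have h2 : 0 < β + τ * α := by positivity
    have hden : 1 - α ≤ 1 - τ * α := by nlinarith
    have t1 : (1 - τ) * α / (1 - τ * α) ≤ α / (1 - α) := by
      apply div_le_div₀ hα.le (by nlinarith) h1a hden
    have hX : 0 ≤ β / (1 - τ * α) + c * (τ * α) * (1 - α - β) / (1 - τ * α) := by
      apply add_nonneg (by positivity)
      apply div_nonneg _ h1.le
      apply mul_nonneg (by positivity) (by linarith)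
    have ht1 : τ * α / (β + τ * α) ≤ 1 := by
      rw [div_le_one h2]; linarith
    have t2 : (β / (1 - τ * α) + c * (τ * α) * (1 - α - β) / (1 - τ * α))
        * (τ * α / (β + τ * α)) ≤ (β + 1) / (1 - α) := by
      calc (β / (1 - τ * α) + c * (τ * α) * (1 - α - β) / (1 - τ * α))
          * (τ * α / (β + τ * α))
          ≤ β / (1 - τ * α) + c * (τ * α) * (1 - α - β) / (1 - τ * α) :=
            mul_le_of_le_one_right hX ht1
        _ = (β + c * (τ * α) * (1 - α - β)) / (1 - τ * α) := by ring
        _ ≤ (β + 1) / (1 - α) := by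
            apply div_le_div₀ (by linarith) _ h1a hden
            have hprod : c * (τ * α) * (1 - α - β) ≤ 1 := by
              calc c * (τ * α) * (1 - α - β) ≤ 1 * 1 * 1 := by
                    gcongr <;> first | positivity | linarith | nlinarith
                _ = 1 := by ring
            linarith
    calc _ ≤ α / (1 - α) + (β + 1) / (1 - α) := add_le_add t1 t2
      _ = (α + β + 1) / (1 - α) := by ring
  · intro τ
    exact key τ.1 τ.2 c hc
end

section
/- Under the bonus reward scheme where fraction t of each block reward goes to the finder of the FPoW, the FAW attacker's reward is R_a(τ,c,t) = (1-τ)α/(1-τα) + (β/(1-τα))(1-t)(τα/(β+τα)) + cτα((1-α-β)/(1-τα))(t + (1-t)τα/(β+τα)). The condition R_a(τ,c,t) < α is equivalent to (τα(c(1-α-β)-1) + τα² + αβ)/(β(1-c(1-α-β))) < t, provided 0 < τ, c(1-α-β) < 1. -/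
theorem faw_bonus_reward_condition (α β τ c t : ℝ)
    (hα0 : 0 < α) (hα1 : α < 1 / 2) (hβ : 0 < β) (hαβ : α + β < 1)
    (hτ0 : 0 < τ) (hτ1 : τ < 1) (hc0 : 0 ≤ c) (hc1 : c * (1 - α - β) < 1)
    (ht0 : 0 ≤ t) (ht1 : t ≤ 1) :
    ((1 - τ) * α / (1 - τ * α)
      + (β / (1 - τ * α)) * (1 - t) * (τ * α / (β + τ * α))
      + c * (τ * α) * ((1 - α - β) / (1 - τ * α)) * (t + (1 - t) * (τ * α / (β + τ * α)))
      < α)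
    ↔ (τ * α * (c * (1 - α - β) - 1) + τ * α ^ 2 + α * β) / (β * (1 - c * (1 - α - β))) < t := by
  have h1 : 0 < 1 - τ * α := by nlinarith
  have h2 : 0 < β + τ * α := by positivity
  have h3 : 0 < β * (1 - c * (1 - α - β)) := by nlinarith
  have key : ((1 - τ) * α / (1 - τ * α)
      + (β / (1 - τ * α)) * (1 - t) * (τ * α / (β + τ * α))
      + c * (τ * α) * ((1 - α - β) / (1 - τ * α)) * (t + (1 - t) * (τ * α / (β + τ * α)))
      - α) * ((1 - τ * α) * (β + τ * α))
      = α * τ * ((τ * α * (c * (1 - α - β) - 1) + τ * α ^ 2 + α * β)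
          - t * (β * (1 - c * (1 - α - β)))) := by
    field_simp
    ring
  rw [div_lt_iff₀ h3]
  constructor <;> intro h
  · nlinarith [mul_pos h1 h2, mul_pos hα0 hτ0]
  · nlinarith [mul_pos h1 h2, mul_pos hα0 hτ0]
end
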